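/- For any valid instance (P,O), the optimal coating runtime satisfies OPT(P,O) ≥ MD(P,O), where MD(P,O) is the matching dilation: the minimum over all legal position sets U ∈ 𝓛 and all perfect matchings M of the complete bipartite graph G(P,U) (with edge (p,u) of cost d(p,u)) of the maximum edge cost in M. -/

import Mathlib

/-- Nodes of the infinite regular triangular grid, realized on `ℤ × ℤ`. -/
abbrev Node : Type := ℤ × ℤ

/-- The infinite regular triangular grid graph `G_eqt`. -/
def Geqt : SimpleGraph Node :=
  SimpleGraph.fromRel (fun u v =>
    (v.1 - u.1, v.2 - u.2) ∈ ({(1, 0), (0, 1), (1, -1)} : Set (ℤ × ℤ)))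

/-- Graph distance in the triangular grid. -/
noncomputable def gdist (u v : Node) : ℕ := Geqt.dist u v

/-- Distance from a node to a set of nodes. -/
noncomputable def gdistSet (v : Node) (U : Set Node) : ℕ := sInf (gdist v '' U)

/-- A coating instance: the initial (contracted) particle positions and an object. -/
structure Instance where
  particles : Set Node
  object : Set Node

/-- Layer `i`: the set of nodes at distance `i` from the object. -/
def layer (O : Set Node) (i : ℕ) : Set Node := {v | gdistSet v O = i}

/-- `B O i` is the number of nodes in layer `i`. -/
noncomputable def B (O : Set Node) (i : ℕ) : ℕ := (layer O i).ncard

/-- The subgraph of `G_eqt` induced by `S` is connected. -/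
def connectedSet (S : Set Node) : Prop := (Geqt.induce S).Connected

/-- `S` is `k`-connected: removing fewer than `k` nodes leaves it connected. -/
def kConnectedSet (k : ℕ) (S : Set Node) : Prop :=
  ∀ D : Set Node, D ⊆ S → D.Finite → D.ncard < k → connectedSet (S \ D)

/-- A valid instance for the universal coating problem: finitely many particles,
all initially contracted (and idle), a single connected object, the particle
system connected to the object, no holes in the object, and no narrow tunnels. -/
def ValidInstance (I : Instance) : Prop :=
  I.particles.Finite ∧ I.particles.Nonempty ∧
  I.particles ∩ I.object = ∅ ∧
  connectedSet I.object ∧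
  connectedSet (I.particles ∪ I.object) ∧
  connectedSet I.objectᶜ ∧
  kConnectedSet (2 * (⌈(I.particles.ncard : ℚ) / (B I.object 1 : ℚ)⌉₊ + 1)) I.objectᶜ

/-- A set of occupied nodes is a legal coating configuration: every unoccupied
non-object node is at least as far from the object as every occupied node. -/
def legal (I : Instance) (S : Set Node) : Prop :=
  ∀ v, v ∉ I.object → v ∉ S → ∀ w ∈ S, gdistSet w I.object ≤ gdistSet v I.object

/-- The particles of an instance, as a type. -/
abbrev Pt (I : Instance) : Type := {v : Node // v ∈ I.particles}

/-- The nodes occupied by a particle given as a (tail, head) pair. -/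
def nodesOf (q : Node × Node) : Set Node := {q.1, q.2}

/-- A particle is contracted if its tail and head coincide. -/
def Contracted (q : Node × Node) : Prop := q.1 = q.2

/-- In one round a particle performs at most one movement:
it stays put, performs a single expansion, or a single contraction. -/
def MoveStep (a b : Node × Node) : Prop :=
  b = a
  ∨ (Contracted a ∧ b.1 = a.1 ∧ Geqt.Adj a.2 b.2)
  ∨ (¬ Contracted a ∧ b = (a.2, a.2))

/-- The set of nodes occupied by the particle system at round `t`. -/
def occupiedAt (I : Instance) (e : ℕ → Pt I → Node × Node) (t : ℕ) : Set Node :=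
  ⋃ p : Pt I, nodesOf (e t p)

/-- An execution: all particles start contracted at their initial positions,
occupy one node or two adjacent nodes, perform at most one movement per round,
never collide with each other, and never enter the object. -/
def IsExec (I : Instance) (e : ℕ → Pt I → Node × Node) : Prop :=
  (∀ p, e 0 p = (p.1, p.1)) ∧
  (∀ t p, Contracted (e t p) ∨ Geqt.Adj (e t p).1 (e t p).2) ∧
  (∀ t p, MoveStep (e t p) (e (t + 1) p)) ∧
  (∀ t p q, p ≠ q → nodesOf (e t p) ∩ nodesOf (e t q) = ∅) ∧
  (∀ t, occupiedAt I e t ∩ I.object = ∅)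

/-- An execution keeps the particle system (together with the object) connected. -/
def ConnectedExec (I : Instance) (e : ℕ → Pt I → Node × Node) : Prop :=
  ∀ t, connectedSet (occupiedAt I e t ∪ I.object)

/-- The execution solves the coating problem by round `T`: all particles are
contracted, the configuration is legal, and it is stable from then on. -/
def SolvesIn (I : Instance) (e : ℕ → Pt I → Node × Node) (T : ℕ) : Prop :=
  (∀ p, Contracted (e T p)) ∧ legal I (occupiedAt I e T) ∧ ∀ t, T ≤ t → e t = e T

/-- `OPT I`: the minimum number of rounds in which any (connectivity-preserving)
sequence of particle movements solves the coating instance `I`. -/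
noncomputable def OPT (I : Instance) : ℕ∞ :=
  sInf {T : ℕ∞ | ∃ T' : ℕ, T = (T' : ℕ∞) ∧
    ∃ e, IsExec I e ∧ ConnectedExec I e ∧ SolvesIn I e T'}

/-- The set `𝓛` of legal particle position sets for the instance `I`:
sets `U` of `n` nodes, disjoint from the object, whose occupation by the
(contracted) particles constitutes a legal coating of the object. -/
def LegalPositions (I : Instance) (U : Set Node) : Prop :=
  U.Finite ∧ U.ncard = I.particles.ncard ∧ U ∩ I.object = ∅ ∧ legal I U

/-- The matching dilation `MD(P,O)`: the minimum, over all legal position sets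
`U ∈ 𝓛` and all perfect matchings of the complete bipartite graph on `P` and
`U` (an edge `(p, u)` having cost `d(p, u)`), of the maximum edge cost of the
matching. -/
noncomputable def MD (I : Instance) : ℕ∞ :=
  sInf {d : ℕ∞ | ∃ U : Set Node, LegalPositions I U ∧
    ∃ σ : {v : Node // v ∈ I.particles} ≃ {u : Node // u ∈ U},
      d = ⨆ p : {v : Node // v ∈ I.particles}, (gdist p.1 (σ p).1 : ℕ∞)}

/-! Each round moves the tail of a particle along at most one grid edge, so after `T` rounds
every particle is within distance `T` of its initial node. If an execution solves the instance
at round `T`, the final nodes of the (contracted, pairwise disjoint) particles form a legal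
position set `U`, and sending each particle to its final node is a perfect matching of
`G(P,U)` whose maximum edge cost is at most `T`. -/

theorem SimpleGraph.dist_le_of_forall_eq_or_adj {V : Type*} {G : SimpleGraph V} {f : ℕ → V}
    (hf : ∀ t, f (t + 1) = f t ∨ G.Adj (f t) (f (t + 1))) (t : ℕ) :
    G.dist (f 0) (f t) ≤ t := by
  suffices ∃ w : G.Walk (f 0) (f t), w.length ≤ t by
    obtain ⟨w, hw⟩ := this
    exact (G.dist_le w).trans hw
  induction t with
  | zero => exact ⟨.nil, le_rfl⟩
  | succ t ih =>
    obtain ⟨w, hw⟩ := ih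
    rcases hf t with hstay | hadj
    · rw [hstay]
      exact ⟨w, hw.trans t.le_succ⟩
    · exact ⟨w.concat hadj, by rw [SimpleGraph.Walk.length_concat]; omega⟩

theorem MoveStep.fst_eq_or_adj {a b : Node × Node} (h : MoveStep a b)
    (ha : Contracted a ∨ Geqt.Adj a.1 a.2) : b.1 = a.1 ∨ Geqt.Adj a.1 b.1 := by
  rcases h with rfl | ⟨-, hfst, -⟩ | ⟨hexp, rfl⟩
  · exact Or.inl rfl
  · exact Or.inl hfst
  · exact Or.inr (ha.resolve_left hexp)

section Execution

variable {I : Instance} {e : ℕ → Pt I → Node × Node}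

theorem IsExec.gdist_fst_le (he : IsExec I e) (t : ℕ) (p : Pt I) : gdist p.1 (e t p).1 ≤ t := by
  have hstep (s : ℕ) : (e (s + 1) p).1 = (e s p).1 ∨ Geqt.Adj (e s p).1 (e (s + 1) p).1 :=
    (he.2.2.1 s p).fst_eq_or_adj (he.2.1 s p)
  simpa [gdist, he.1 p] using
    SimpleGraph.dist_le_of_forall_eq_or_adj (f := fun s => (e s p).1) hstep t

theorem IsExec.injective_fst (he : IsExec I e) (t : ℕ) :
    Function.Injective fun p => (e t p).1 := by
  intro p q hpq
  by_contra hne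
  have hshared : (e t p).1 ∈ nodesOf (e t p) ∩ nodesOf (e t q) :=
    ⟨Or.inl rfl, Or.inl hpq⟩
  simp [he.2.2.2.1 t p q hne] at hshared

theorem occupiedAt_eq_range_fst {t : ℕ} (hc : ∀ p, Contracted (e t p)) :
    occupiedAt I e t = Set.range fun p => (e t p).1 := by
  have hsnd (p : Pt I) : (e t p).2 = (e t p).1 := (hc p).symm
  ext v
  simp only [occupiedAt, nodesOf, hsnd, Set.mem_iUnion, Set.mem_insert_iff,
    Set.mem_singleton_iff, Set.mem_range, or_self, eq_comm]

theorem legalPositions_range_fst [Finite (Pt I)] {T : ℕ} (he : IsExec I e)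
    (hs : SolvesIn I e T) : LegalPositions I (Set.range fun p => (e T p).1) := by
  have hrange := occupiedAt_eq_range_fst hs.1
  refine ⟨Set.finite_range _, ?_, hrange ▸ he.2.2.2.2 T, hrange ▸ hs.2.1⟩
  rw [Set.ncard_range_of_injective (he.injective_fst T), Nat.card_coe_set_eq]

end Execution

theorem MD_le_iSup_gdist {I : Instance} (f : Pt I → Node) (hf : Function.Injective f)
    (hU : LegalPositions I (Set.range f)) : MD I ≤ ⨆ p : Pt I, (gdist p.1 (f p) : ℕ∞) :=
  sInf_le ⟨_, hU, Equiv.ofInjective f hf, rfl⟩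

/-- For any valid instance `(P,O)`, the optimal coating
runtime satisfies `OPT(P,O) ≥ MD(P,O)`: since each particle moves along at
most one grid edge per round and has to move to some position of a legal
coating, the minimum number of rounds needed to solve the coating instance is
at least the matching dilation. -/
theorem stmt18 (I : Instance) (hI : ValidInstance I) : MD I ≤ OPT I := by
  have : Finite (Pt I) := hI.1.to_subtype
  refine le_sInf ?_
  rintro _ ⟨T, rfl, e, he, -, hs⟩
  calc MD I ≤ ⨆ p : Pt I, (gdist p.1 (e T p).1 : ℕ∞) :=
        MD_le_iSup_gdist _ (he.injective_fst T) (legalPositions_range_fst he hs)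
    _ ≤ T := iSup_le fun p => Nat.cast_le.mpr (he.gdist_fst_le T p)
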